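/- Let 0 ≤ k ≤ n−1 and let σ : {0,…,k} → {0,…,n} be increasing with range ⟦σ⟧, and write dλ_σ := dλ_{σ(0)} ∧ ⋯ ∧ dλ_{σ(k)} ∈ Alt^{k+1} ℝⁿ. For j ∉ ⟦σ⟧ define φ_{jσ} := λ_j · dλ_σ − dλ_j ∧ φ_σ (a (k+1)-form on ℝⁿ). Then Σ_{j ∉ ⟦σ⟧} φ_{jσ}(x) = dλ_σ for every x ∈ ℝⁿ. -/

import Mathlib

open scoped BigOperators

noncomputable section

/-- The wedge product of `k` linear functionals on `ℝⁿ`: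
`(wedge f) v = det (matrix whose (j,i) entry is f i (v j))`. -/
def wedge {n k : ℕ} (f : Fin k → ((Fin n → ℝ) →ₗ[ℝ] ℝ)) :
    (Fin n → ℝ) [⋀^Fin k]→ₗ[ℝ] ℝ :=
  (Matrix.detRowAlternating : (Fin k → ℝ) [⋀^Fin k]→ₗ[ℝ] ℝ).compLinearMap
    (LinearMap.pi f)

/-- The wedge product of a linear functional (a `1`-form) with an alternating `k`-form on `ℝⁿ`. -/
def oneWedge {n k : ℕ} (f : (Fin n → ℝ) →ₗ[ℝ] ℝ)
    (η : (Fin n → ℝ) [⋀^Fin k]→ₗ[ℝ] ℝ) :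
    (Fin n → ℝ) [⋀^Fin (k + 1)]→ₗ[ℝ] ℝ :=
  ((TensorProduct.lid ℝ ℝ).toLinearMap.compAlternatingMap
    (AlternatingMap.domCoprod
      ((AlternatingMap.ofSubsingleton ℝ (Fin n → ℝ) ℝ (0 : Fin 1)) f) η)).domDomCongr
    (finSumFinEquiv.trans (finCongr (Nat.add_comm 1 k)))

/-- A nondegenerate simplex in `ℝⁿ` with vertices `x 0, …, x n`, together with its barycentric
coordinate functions `λ_i = dlam i + c i`: the unique affine functions with `λ_i (x j) = δ_{ij}`,
`dlam i` being the linear part `dλ_i`. -/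
structure Simplex (n : ℕ) where
  x : Fin (n + 1) → (Fin n → ℝ)
  affineIndep : AffineIndependent ℝ x
  dlam : Fin (n + 1) → ((Fin n → ℝ) →ₗ[ℝ] ℝ)
  c : Fin (n + 1) → ℝ
  lam_vertex : ∀ i j, dlam i (x j) + c i = if i = j then 1 else 0

namespace Simplex

variable {n : ℕ} (B : Simplex n)

/-- The barycentric coordinate function `λ_i`. -/
def lam (i : Fin (n + 1)) (y : Fin n → ℝ) : ℝ := B.dlam i y + B.c i

/-- The barycentric monomial `λ^α = λ_0^{α_0} ⋯ λ_n^{α_n}`. -/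
def lamPow (α : Fin (n + 1) → ℕ) (y : Fin n → ℝ) : ℝ := ∏ i, (B.lam i y) ^ (α i)

/-- `dλ_σ = dλ_{σ 0} ∧ ⋯ ∧ dλ_{σ (k-1)}`. -/
def dlamWedge {k : ℕ} (σ : Fin k → Fin (n + 1)) : (Fin n → ℝ) [⋀^Fin k]→ₗ[ℝ] ℝ :=
  wedge fun j => B.dlam (σ j)

/-- The Whitney form `φ_σ = Σ_i (-1)^i λ_{σ i} dλ_{σ 0} ∧ ⋯ ∧ (omit dλ_{σ i}) ∧ ⋯ ∧ dλ_{σ k}`. -/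
def whitney {k : ℕ} (σ : Fin (k + 1) → Fin (n + 1)) (y : Fin n → ℝ) :
    (Fin n → ℝ) [⋀^Fin k]→ₗ[ℝ] ℝ :=
  ∑ i : Fin (k + 1), ((-1 : ℝ) ^ (i : ℕ) * B.lam (σ i) y) •
    wedge fun j : Fin k => B.dlam (σ (i.succAbove j))

/-- The tangent space `T_S = ∩_{i ∉ S} ker dλ_i` of the face `f_S`. -/
def tangent (S : Finset (Fin (n + 1))) : Set (Fin n → ℝ) :=
  {v | ∀ i ∉ S, B.dlam i v = 0}

/-- `ψ^{α,S}_i = dλ_i - (α_i / r) Σ_{j ∈ S} dλ_j`. -/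
def psi (α : Fin (n + 1) → ℕ) (r : ℕ) (S : Finset (Fin (n + 1))) (i : Fin (n + 1)) :
    (Fin n → ℝ) →ₗ[ℝ] ℝ :=
  B.dlam i - ((α i : ℝ) / (r : ℝ)) • ∑ j ∈ S, B.dlam j

/-- `ψ^{α,S}_σ = ψ^{α,S}_{σ 1} ∧ ⋯ ∧ ψ^{α,S}_{σ k}`. -/
def psiWedge {k : ℕ} (α : Fin (n + 1) → ℕ) (r : ℕ) (S : Finset (Fin (n + 1)))
    (σ : Fin k → Fin (n + 1)) : (Fin n → ℝ) [⋀^Fin k]→ₗ[ℝ] ℝ :=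
  wedge fun j => B.psi α r S (σ j)

/-- The list of direction vectors `x_j - x_l`, with `x_j - x_l` repeated `α j` times. -/
def dirList (α : Fin (n + 1) → ℕ) (l : Fin (n + 1)) : List (Fin n → ℝ) :=
  (List.finRange (n + 1)).flatMap fun j => List.replicate (α j) (B.x j - B.x l)

end Simplex

/-- The support `⟦α⟧` of a multi-index. -/
def suppF {n : ℕ} (α : Fin (n + 1) → ℕ) : Finset (Fin (n + 1)) :=
  Finset.univ.filter fun i => α i ≠ 0

/-- The range `⟦σ⟧` of an (increasing) map, as a finset. -/
def rangeF {n k : ℕ} (σ : Fin k → Fin (n + 1)) : Finset (Fin (n + 1)) :=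
  Finset.image σ Finset.univ

/-- `f : ℝⁿ → ℝ` is a polynomial function of (total) degree at most `r`. -/
def IsPolyDeg {n : ℕ} (r : ℕ) (f : (Fin n → ℝ) → ℝ) : Prop :=
  ∃ p : MvPolynomial (Fin n) ℝ, p.totalDegree ≤ r ∧ ∀ y, MvPolynomial.eval y p = f y

/-- `P_r`: the space of polynomial functions on `ℝⁿ` of degree at most `r`. -/
def Pscalar (n r : ℕ) : Submodule ℝ ((Fin n → ℝ) → ℝ) where
  carrier := {f | IsPolyDeg r f}
  add_mem' := by
    rintro f g ⟨p, hp, hpe⟩ ⟨q, hq, hqe⟩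
    exact ⟨p + q, le_trans (MvPolynomial.totalDegree_add p q) (max_le hp hq),
      fun y => by simp [hpe y, hqe y]⟩
  zero_mem' := ⟨0, by simp, fun y => by simp⟩
  smul_mem' := by
    rintro a f ⟨p, hp, hpe⟩
    exact ⟨a • p, le_trans (MvPolynomial.totalDegree_smul_le a p) hp,
      fun y => by simp [MvPolynomial.smul_eq_C_mul, hpe y]⟩

/-- `P_r Λ^k`: the space of polynomial differential `k`-forms of degree at most `r` on `ℝⁿ`. -/
def PLambda (n r k : ℕ) :
    Submodule ℝ ((Fin n → ℝ) → ((Fin n → ℝ) [⋀^Fin k]→ₗ[ℝ] ℝ)) where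
  carrier := {ω | ∀ v : Fin k → (Fin n → ℝ), IsPolyDeg r fun y => ω y v}
  add_mem' := by
    intro ω η hω hη v
    exact (Pscalar n r).add_mem (hω v) (hη v)
  zero_mem' := fun v => (Pscalar n r).zero_mem
  smul_mem' := by
    intro a ω hω v
    exact (Pscalar n r).smul_mem a (hω v)

/-- The Koszul operator `κ`, contracting a `(k+1)`-form field with the position vector. -/
def koszulHom (n k : ℕ) :
    ((Fin n → ℝ) → ((Fin n → ℝ) [⋀^Fin (k + 1)]→ₗ[ℝ] ℝ)) →ₗ[ℝ]
      ((Fin n → ℝ) → ((Fin n → ℝ) [⋀^Fin k]→ₗ[ℝ] ℝ)) where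
  toFun ω := fun y => (ω y).curryLeft y
  map_add' ω η := by funext y; simp
  map_smul' a ω := by funext y; simp

/-- `P⁻_r Λ^k = P_{r-1} Λ^k + κ (P_{r-1} Λ^{k+1})`. -/
def PminusLambda (n r k : ℕ) :
    Submodule ℝ ((Fin n → ℝ) → ((Fin n → ℝ) [⋀^Fin k]→ₗ[ℝ] ℝ)) :=
  PLambda n (r - 1) k ⊔ Submodule.map (koszulHom n k) (PLambda n (r - 1) (k + 1))

/-- `ω` has vanishing trace on the face `f_S`. -/
def VanishTrace {n k : ℕ} (B : Simplex n) (S : Finset (Fin (n + 1)))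
    (ω : (Fin n → ℝ) → ((Fin n → ℝ) [⋀^Fin k]→ₗ[ℝ] ℝ)) : Prop :=
  ∀ y : Fin n → ℝ, (∀ i ∉ S, B.lam i y = 0) →
    ∀ v : Fin k → (Fin n → ℝ), (∀ j, v j ∈ B.tangent S) → ω y v = 0

/-- Forms having vanishing trace on every face `f_S` with `|S| = n`
(the codimension-one faces). -/
def traceZeroSub {n : ℕ} (B : Simplex n) (k : ℕ) :
    Submodule ℝ ((Fin n → ℝ) → ((Fin n → ℝ) [⋀^Fin k]→ₗ[ℝ] ℝ)) where
  carrier := {ω | ∀ S : Finset (Fin (n + 1)), S.card = n → VanishTrace B S ω}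
  add_mem' := by
    intro ω η hω hη S hS y hy v hv
    simp only [Pi.add_apply, AlternatingMap.add_apply, hω S hS y hy v hv,
      hη S hS y hy v hv, add_zero]
  zero_mem' := by intro S hS y hy v hv; simp
  smul_mem' := by
    intro a ω hω S hS y hy v hv
    simp only [Pi.smul_apply, AlternatingMap.smul_apply, hω S hS y hy v hv, smul_zero]

/-- `P̊_r Λ^k`: polynomial forms with vanishing trace on the boundary. -/
def PLambdaZero {n : ℕ} (B : Simplex n) (r k : ℕ) :
    Submodule ℝ ((Fin n → ℝ) → ((Fin n → ℝ) [⋀^Fin k]→ₗ[ℝ] ℝ)) :=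
  PLambda n r k ⊓ traceZeroSub B k

/-- `P̊⁻_r Λ^k`: forms in `P⁻_r Λ^k` with vanishing trace on the boundary. -/
def PminusLambdaZero {n : ℕ} (B : Simplex n) (r k : ℕ) :
    Submodule ℝ ((Fin n → ℝ) → ((Fin n → ℝ) [⋀^Fin k]→ₗ[ℝ] ℝ)) :=
  PminusLambda n r k ⊓ traceZeroSub B k

/-- `f` vanishes to order `r` at `y`: all partial derivatives of order `< r` vanish at `y`. -/
def VanishOrder {n : ℕ} (r : ℕ) (f : (Fin n → ℝ) → ℝ) (y : Fin n → ℝ) : Prop :=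
  ∀ m : ℕ, m < r → iteratedFDeriv ℝ m f y = 0

/-- Iterated directional derivatives along a list of directions. -/
def dirDerivList {n : ℕ} : List (Fin n → ℝ) → ((Fin n → ℝ) → ℝ) → ((Fin n → ℝ) → ℝ)
  | [], f => f
  | t :: ts, f => dirDerivList ts fun y => fderiv ℝ f y t


/-!
Summed over all `j`, the forms `φ_{jσ}` give `dλ_σ`, because `∑ λ_j = 1` and `∑ dλ_j = 0` (the
linear functional `∑ dλ_j` is constant on the vertices, which affinely span `ℝⁿ`). It remains to
see that `φ_{jσ} = 0` for `j = σ m`, i.e. `dλ_{σ m} ∧ φ_σ = λ_{σ m} dλ_σ`: in the expansion of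
`φ_σ`, wedging with `dλ_{σ m}` kills every term except the one omitting `dλ_{σ m}`, and moving
that factor back to slot `m` costs the sign `(-1)^m` the term already carries. Wedging with a
`1`-form is computed by the expansion `(f ∧ η)(v) = ∑ᵢ (-1)^i f(vᵢ) η(v without vᵢ)`, which makes
`f ∧ (wedge g)` a Laplace expansion of `wedge (f, g)`.
-/

theorem LinearMap.eq_zero_of_vectorSpan_eq_top {K V W : Type*} [Ring K] [AddCommGroup V]
    [Module K V] [AddCommGroup W] [Module K W] {s : Set V} (hs : vectorSpan K s = ⊤)
    (L : V →ₗ[K] W) (hL : ∀ x ∈ s, ∀ y ∈ s, L x = L y) : L = 0 := by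
  rw [vectorSpan_def] at hs
  refine LinearMap.ker_eq_top.mp (top_le_iff.mp (hs ▸ Submodule.span_le.mpr ?_))
  rintro _ ⟨x, hx, y, hy, rfl⟩
  simp [vsub_eq_sub, hL x hx y hy]

section
open Equiv Equiv.Perm

variable {k : ℕ}

def finOneSumEquiv (k : ℕ) : Fin 1 ⊕ Fin k ≃ Fin (k + 1) :=
  finSumFinEquiv.trans (finCongr (Nat.add_comm 1 k))

@[simp] lemma finOneSumEquiv_inl (a : Fin 1) : finOneSumEquiv k (.inl a) = 0 := by
  ext; simp [finOneSumEquiv]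

@[simp] lemma finOneSumEquiv_inr (j : Fin k) : finOneSumEquiv k (.inr j) = j.succ := by
  ext; simp [finOneSumEquiv]

/-- `cosetRep i` sends the first slot to position `i` and the other slots, in order, to the
remaining positions. A coset in `ModSumCongr (Fin 1) (Fin k)` is determined by the image of the
first slot, so these represent every coset exactly once. -/
def cosetRep (i : Fin (k + 1)) : Perm (Fin 1 ⊕ Fin k) :=
  (finOneSumEquiv k).symm.permCongr i.cycleRange.symm

lemma finOneSumEquiv_cosetRep (i : Fin (k + 1)) (x : Fin 1 ⊕ Fin k) :
    finOneSumEquiv k (cosetRep i x) = i.cycleRange.symm (finOneSumEquiv k x) := by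
  simp [cosetRep, permCongr_apply]

lemma cosetRep_inl (i : Fin (k + 1)) (a : Fin 1) :
    cosetRep i (.inl a) = (finOneSumEquiv k).symm i := by
  rw [Equiv.eq_symm_apply, finOneSumEquiv_cosetRep, finOneSumEquiv_inl, Fin.cycleRange_symm_zero]

lemma sign_cosetRep (i : Fin (k + 1)) : sign (cosetRep i) = (-1) ^ (i : ℕ) := by
  rw [cosetRep, sign_permCongr, sign_symm, Fin.sign_cycleRange]

lemma bijective_mk_cosetRep : Function.Bijective
    fun i : Fin (k + 1) => (Quotient.mk'' (cosetRep i) : ModSumCongr (Fin 1) (Fin k)) := by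
  refine ⟨fun i j hij => ?_, fun q => ?_⟩
  · obtain ⟨⟨σ₁, σ₂⟩, h⟩ := QuotientGroup.leftRel_apply.mp (Quotient.exact' hij)
    have h0 := congrArg (· (Sum.inl 0)) h
    simp only [sumCongrHom_apply, Perm.sumCongr_apply, Sum.map_inl, mul_apply,
      Subsingleton.elim (σ₁ 0) 0] at h0
    rw [eq_comm, inv_eq_iff_eq, cosetRep_inl, cosetRep_inl] at h0
    exact (finOneSumEquiv k).symm.injective h0.symm
  · induction q using Quotient.inductionOn' with
    | h τ =>
    refine ⟨finOneSumEquiv k (τ (.inl 0)), Quotient.sound' ?_⟩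
    rw [QuotientGroup.leftRel_apply]
    apply mem_sumCongrHom_range_of_perm_mapsTo_inl
    rintro _ ⟨a, rfl⟩
    refine ⟨0, ?_⟩
    rw [Subsingleton.elim a 0, mul_apply, eq_comm, inv_eq_iff_eq, cosetRep_inl,
      Equiv.symm_apply_apply]

end

section
variable {n k : ℕ}

theorem oneWedge_apply (f : (Fin n → ℝ) →ₗ[ℝ] ℝ) (η : (Fin n → ℝ) [⋀^Fin k]→ₗ[ℝ] ℝ)
    (v : Fin (k + 1) → Fin n → ℝ) :
    oneWedge f η v = ∑ i : Fin (k + 1), (-1) ^ (i : ℕ) * f (v i) * η (i.removeNth v) := by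
  set a := AlternatingMap.ofSubsingleton ℝ (Fin n → ℝ) ℝ (0 : Fin 1) f
  have h : oneWedge f η v = TensorProduct.lid ℝ ℝ
      ((∑ q : Equiv.Perm.ModSumCongr (Fin 1) (Fin k), AlternatingMap.domCoprod.summand a η q)
        (v ∘ finOneSumEquiv k)) := rfl
  rw [h, FunLike.coe_sum, Finset.sum_apply, map_sum]
  refine (bijective_mk_cosetRep.sum_comp _).symm.trans (Finset.sum_congr rfl fun i _ => ?_)
  rw [AlternatingMap.domCoprod.summand_mk'', sign_cosetRep, smul_apply,
    MultilinearMap.domDomCongr_apply, MultilinearMap.domCoprod_apply, Units.smul_def, map_zsmul,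
    TensorProduct.lid_tmul, zsmul_eq_mul]
  simp only [Units.val_pow_eq_pow_val, Units.val_neg, Units.val_one, Int.cast_pow, Int.cast_neg,
    Int.cast_one, Function.comp_apply, finOneSumEquiv_cosetRep, finOneSumEquiv_inl,
    Fin.cycleRange_symm_zero, AlternatingMap.coe_multilinearMap,
    AlternatingMap.ofSubsingleton_apply_apply, finOneSumEquiv_inr, Fin.cycleRange_symm_succ, a]
  exact (mul_assoc _ _ _).symm

def oneWedgeBilin (n k : ℕ) : ((Fin n → ℝ) →ₗ[ℝ] ℝ) →ₗ[ℝ]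
    ((Fin n → ℝ) [⋀^Fin k]→ₗ[ℝ] ℝ) →ₗ[ℝ] (Fin n → ℝ) [⋀^Fin (k + 1)]→ₗ[ℝ] ℝ :=
  LinearMap.mk₂ ℝ oneWedge
    (fun f₁ f₂ η => by ext v; simp [oneWedge_apply, add_mul, mul_add, Finset.sum_add_distrib])
    (fun c f η => by ext v; simp [oneWedge_apply, Finset.mul_sum, mul_left_comm, mul_assoc])
    (fun f η₁ η₂ => by ext v; simp [oneWedge_apply, mul_add, Finset.sum_add_distrib])
    (fun c f η => by ext v; simp [oneWedge_apply, Finset.mul_sum, mul_left_comm])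

theorem oneWedgeBilin_apply (f : (Fin n → ℝ) →ₗ[ℝ] ℝ) (η : (Fin n → ℝ) [⋀^Fin k]→ₗ[ℝ] ℝ) :
    oneWedgeBilin n k f η = oneWedge f η :=
  rfl

theorem wedge_apply (g : Fin k → (Fin n → ℝ) →ₗ[ℝ] ℝ) (v : Fin k → Fin n → ℝ) :
    wedge g v = (Matrix.of fun j i => g i (v j)).det :=
  rfl

/-- `wedge g v` is alternating in the functionals `g` as well as in the vectors `v`. -/
theorem wedge_apply_eq_detRowAlternating (g : Fin k → (Fin n → ℝ) →ₗ[ℝ] ℝ)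
    (v : Fin k → Fin n → ℝ) :
    wedge g v = Matrix.detRowAlternating.compLinearMap
      (LinearMap.pi fun j => LinearMap.applyₗ (R := ℝ) (v j)) g :=
  (Matrix.det_transpose _).symm

theorem wedge_eq_zero_of_eq {g : Fin k → (Fin n → ℝ) →ₗ[ℝ] ℝ} {i j : Fin k}
    (hg : g i = g j) (hij : i ≠ j) : wedge g = 0 := by
  ext v
  rw [wedge_apply_eq_detRowAlternating, AlternatingMap.map_eq_zero_of_eq _ _ hg hij,
    AlternatingMap.zero_apply]

theorem wedge_cons_removeNth (g : Fin (k + 1) → (Fin n → ℝ) →ₗ[ℝ] ℝ) (m : Fin (k + 1)) :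
    wedge (Fin.cons (g m) (m.removeNth g)) = (-1 : ℝ) ^ (m : ℕ) • wedge g := by
  ext v
  rw [AlternatingMap.smul_apply, wedge_apply_eq_detRowAlternating,
    wedge_apply_eq_detRowAlternating,
    show Fin.cons (g m) (m.removeNth g) = Matrix.vecCons (g m) (m.removeNth g) from rfl,
    ← AlternatingMap.neg_one_pow_smul_map_insertNth, Fin.insertNth_self_removeNth, zsmul_eq_mul,
    smul_eq_mul, Int.cast_pow, Int.cast_neg, Int.cast_one]

theorem oneWedge_wedge (f : (Fin n → ℝ) →ₗ[ℝ] ℝ) (g : Fin k → (Fin n → ℝ) →ₗ[ℝ] ℝ) :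
    oneWedge f (wedge g) = wedge (Fin.cons f g) := by
  ext v
  rw [oneWedge_apply, wedge_apply, Matrix.det_succ_column_zero]
  rfl

theorem oneWedge_alternating_sum_removeNth (g : Fin (k + 1) → (Fin n → ℝ) →ₗ[ℝ] ℝ)
    (c : Fin (k + 1) → ℝ) (m : Fin (k + 1)) :
    oneWedge (g m) (∑ i : Fin (k + 1), ((-1) ^ (i : ℕ) * c i) • wedge (i.removeNth g)) =
      c m • wedge g := by
  rw [← oneWedgeBilin_apply, map_sum]
  simp_rw [map_smul, oneWedgeBilin_apply, oneWedge_wedge]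
  rw [Finset.sum_eq_single m]
  · rw [wedge_cons_removeNth, smul_smul, mul_right_comm, ← pow_add, Even.neg_one_pow ⟨_, rfl⟩,
      one_mul]
  · intro i _ hi
    obtain ⟨l, hl⟩ := Fin.exists_succAbove_eq (Ne.symm hi)
    rw [wedge_eq_zero_of_eq (i := 0) (j := l.succ) (by simp [Fin.removeNth, hl])
      (Fin.succ_ne_zero l).symm, smul_zero]
  · simp

end

namespace Simplex

variable {n : ℕ} (B : Simplex n)

theorem lam_apply_vertex (i j : Fin (n + 1)) : B.lam i (B.x j) = if i = j then 1 else 0 :=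
  B.lam_vertex i j

theorem sum_lam_sub_sum_lam (y z : Fin n → ℝ) :
    ∑ i, B.lam i y - ∑ i, B.lam i z = (∑ i, B.dlam i) (y - z) := by
  simp [lam, Finset.sum_add_distrib]

theorem sum_dlam : ∑ i, B.dlam i = 0 := by
  refine LinearMap.eq_zero_of_vectorSpan_eq_top
    (B.affineIndep.vectorSpan_eq_top_of_card_eq_finrank_add_one (by simp)) _ ?_
  rintro _ ⟨a, rfl⟩ _ ⟨b, rfl⟩
  rw [← sub_eq_zero, ← map_sub, ← sum_lam_sub_sum_lam]
  simp [lam_apply_vertex]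

theorem sum_lam (y : Fin n → ℝ) : ∑ i, B.lam i y = 1 := by
  have h := B.sum_lam_sub_sum_lam y (B.x 0)
  rw [sum_dlam, LinearMap.zero_apply, sub_eq_zero] at h
  simp [h, lam_apply_vertex]

theorem sum_oneWedge_dlam {k : ℕ} (η : (Fin n → ℝ) [⋀^Fin k]→ₗ[ℝ] ℝ) :
    ∑ j, oneWedge (B.dlam j) η = 0 := by
  simp only [← oneWedgeBilin_apply, ← LinearMap.sum_apply, ← map_sum, sum_dlam, map_zero,
    LinearMap.zero_apply]

theorem oneWedge_dlam_whitney {k : ℕ} (σ : Fin (k + 1) → Fin (n + 1)) (y : Fin n → ℝ)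
    (m : Fin (k + 1)) :
    oneWedge (B.dlam (σ m)) (B.whitney σ y) = B.lam (σ m) y • B.dlamWedge σ :=
  oneWedge_alternating_sum_removeNth (fun l => B.dlam (σ l)) (fun l => B.lam (σ l) y) m

end Simplex

theorem stmt18_general {n k : ℕ} (B : Simplex n) (σ : Fin (k + 1) → Fin (n + 1)) :
    ∀ y : Fin n → ℝ,
      (∑ j ∈ Finset.univ \ rangeF σ,
        (B.lam j y • B.dlamWedge σ - oneWedge (B.dlam j) (B.whitney σ y)))
        = B.dlamWedge σ := by
  intro y
  have hrange : ∀ j ∈ rangeF σ,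
      B.lam j y • B.dlamWedge σ - oneWedge (B.dlam j) (B.whitney σ y) = 0 := by
    simp only [rangeF, Finset.mem_image]
    rintro _ ⟨m, -, rfl⟩
    rw [B.oneWedge_dlam_whitney, sub_self]
  rw [Finset.sum_sdiff_eq_sub (Finset.subset_univ _), Finset.sum_eq_zero hrange, sub_zero,
    Finset.sum_sub_distrib, ← Finset.sum_smul, B.sum_lam, one_smul, B.sum_oneWedge_dlam, sub_zero]

/-- with `φ_{jσ} := λ_j dλ_σ - dλ_j ∧ φ_σ` for `j ∉ ⟦σ⟧`, one has
`Σ_{j ∉ ⟦σ⟧} φ_{jσ}(x) = dλ_σ` for every `x`. -/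
theorem stmt18 {n k : ℕ} (hn : 1 ≤ n) (B : Simplex n) (hk : k + 1 ≤ n)
    (σ : Fin (k + 1) → Fin (n + 1)) (hσ : StrictMono σ) :
    ∀ y : Fin n → ℝ,
      (∑ j ∈ Finset.univ \ rangeF σ,
        (B.lam j y • B.dlamWedge σ - oneWedge (B.dlam j) (B.whitney σ y)))
        = B.dlamWedge σ :=
  stmt18_general B σ
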